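/- Let X = Option (ZMod 125), writing ∞ for none, with ZMod 125 acting on X by translation (t • some x = some (x + t), t • ∞ = ∞). Let ℬ be the family of all translates of the five base blocks B1 = {0,1,3,15,47,74}, B2 = {0,4,26,64,109,120}, B3 = {0,6,40,88,95,112}, B4 = {0,8,29,57,92,115} (as subsets of X via some), and B5 = {0,25,50,75,100} ∪ {∞}. Then every block of ℬ has exactly 6 elements and every pair of distinct points of X is contained in exactly one block of ℬ; that is, ℬ is a Steiner system S(2,6,126) (a unital of order 5) on X, invariant under the translation action with the single fixed point ∞. -/

import Mathlib

/-- Translation action of `ZMod 125` on `Option (ZMod 125)`: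
`t • some x = some (x + t)`, `t • ∞ = ∞`. -/
def tr125 (t : ZMod 125) : Option (ZMod 125) → Option (ZMod 125) :=
  Option.map (fun a => a + t)

/-- The five base blocks of the difference family. -/
def baseBlocks1 : List (Finset (Option (ZMod 125))) :=
  [ {some 0, some 1, some 3, some 15, some 47, some 74},
    {some 0, some 4, some 26, some 64, some 109, some 120},
    {some 0, some 6, some 40, some 88, some 95, some 112},
    {some 0, some 8, some 29, some 57, some 92, some 115},
    {some 0, some 25, some 50, some 75, some 100, none} ]

/-- The family of all translates of the base blocks. -/
def blocks1 : Set (Finset (Option (ZMod 125))) :=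
  { B | ∃ t : ZMod 125, ∃ B0 ∈ baseBlocks1, B = B0.image (tr125 t) }


/-!
The four full base blocks form a relative difference family: their `4 · 30 = 120` differences,
together with the four nonzero elements of the subgroup `⟨25⟩`, cover every nonzero residue
mod 125 exactly once. The fifth block `⟨25⟩ ∪ {∞}` is a short orbit, fixed by translations in
`⟨25⟩`. Hence two finite points `x`, `x + d` lie in exactly one block, determined by the unique
representation of `d` as a difference inside a base block, and `x`, `∞` lie only in `B5 + x`.
-/

section Translation

variable {G : Type*} [AddGroup G]

theorem Option.map_add_right_injective (t : G) : Function.Injective (Option.map (· + t)) :=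
  Option.map_injective (add_left_injective t)

variable [DecidableEq G]

theorem Finset.image_map_add_image_map_add (B : Finset (Option G)) (s t : G) :
    (B.image (Option.map (· + s))).image (Option.map (· + t)) =
      B.image (Option.map (· + (s + t))) := by
  rw [Finset.image_image, Option.map_comp_map]
  simp only [Function.comp_def, add_assoc]

theorem Finset.some_mem_image_map_add {B : Finset (Option G)} {t y : G} :
    some y ∈ B.image (Option.map (· + t)) ↔ some (y - t) ∈ B := by
  simp only [Finset.mem_image, Option.map_eq_some_iff]
  constructor
  · rintro ⟨b, hb, a, rfl, rfl⟩
    simpa using hb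
  · exact fun h => ⟨_, h, y - t, rfl, sub_add_cancel y t⟩

theorem Finset.none_mem_image_map_add {B : Finset (Option G)} {t : G} :
    none ∈ B.image (Option.map (· + t)) ↔ none ∈ B := by
  simp [Finset.mem_image, Option.map_eq_none_iff]

end Translation

/-- The finite points of `baseBlocks1`, as lists so that the `decide` proofs below stay cheap;
index `4` is the short orbit `B5`. -/
def baseOffsets : Fin 5 → List (ZMod 125) :=
  ![[0, 1, 3, 15, 47, 74], [0, 4, 26, 64, 109, 120], [0, 6, 40, 88, 95, 112],
    [0, 8, 29, 57, 92, 115], [0, 25, 50, 75, 100]]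

def baseBlock (i : Fin 5) : Finset (Option (ZMod 125)) := baseBlocks1.get i

set_option maxRecDepth 20000 in
theorem some_mem_baseBlock : ∀ i z, some z ∈ baseBlock i ↔ z ∈ baseOffsets i := by decide

theorem none_mem_baseBlock : ∀ i, none ∈ baseBlock i ↔ i = 4 := by decide

theorem card_baseBlock : ∀ i, (baseBlock i).card = 6 := by decide

set_option maxRecDepth 20000 in
theorem image_tr125_neg_baseBlock_four :
    ∀ c ∈ baseOffsets 4, (baseBlock 4).image (tr125 (-c)) = baseBlock 4 := by decide

theorem mem_blocks1 {B : Finset (Option (ZMod 125))} :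
    B ∈ blocks1 ↔ ∃ t i, B = (baseBlock i).image (tr125 t) := by
  constructor
  · rintro ⟨t, B0, hB0, rfl⟩
    obtain ⟨i, rfl⟩ := List.mem_iff_get.mp hB0
    exact ⟨t, i, rfl⟩
  · rintro ⟨t, i, rfl⟩
    exact ⟨t, baseBlock i, List.get_mem _ _, rfl⟩

/-- For `i = 4` the normalization `a = 0` is possible because `B5` is fixed by translations
in `⟨25⟩`. -/
theorem exists_eq_image_of_some_mem {B : Finset (Option (ZMod 125))} (hB : B ∈ blocks1)
    {x : ZMod 125} (hx : some x ∈ B) :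
    ∃ i a, a ∈ baseOffsets i ∧ (i = 4 → a = 0) ∧ B = (baseBlock i).image (tr125 (x - a)) := by
  obtain ⟨t, i, rfl⟩ := mem_blocks1.mp hB
  have hxt : x - t ∈ baseOffsets i :=
    (some_mem_baseBlock i _).mp (Finset.some_mem_image_map_add.mp hx)
  by_cases hi : i = 4
  · subst hi
    refine ⟨4, 0, by decide, fun _ => rfl, ?_⟩
    calc (baseBlock 4).image (tr125 t)
        = ((baseBlock 4).image (tr125 (-(x - t)))).image (tr125 x) := by
          unfold tr125
          rw [Finset.image_map_add_image_map_add, neg_sub, sub_add_cancel]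
      _ = (baseBlock 4).image (tr125 (x - 0)) := by
          rw [image_tr125_neg_baseBlock_four _ hxt, sub_zero]
  · exact ⟨i, x - t, hxt, fun h => absurd h hi, by rw [sub_sub_cancel]⟩

/-- Representations of `d` as a difference inside a base block. On the short orbit only `a = 0`
is kept, since all its translates by `⟨25⟩` are the same block. -/
def differenceReps (d : ZMod 125) : List (Fin 5 × ZMod 125) :=
  (List.finRange 5).flatMap fun i =>
    ((baseOffsets i).filter fun a => a + d ∈ baseOffsets i ∧ (i = 4 → a = 0)).map (i, ·)

theorem mem_differenceReps {d : ZMod 125} {i : Fin 5} {a : ZMod 125} :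
    (i, a) ∈ differenceReps d ↔
      a ∈ baseOffsets i ∧ a + d ∈ baseOffsets i ∧ (i = 4 → a = 0) := by
  simp [differenceReps, imp_iff_not_or]

set_option maxRecDepth 20000 in
theorem length_differenceReps : ∀ d : ZMod 125, d ≠ 0 → (differenceReps d).length = 1 := by
  decide

theorem some_mem_image_tr125_baseBlock {i : Fin 5} {t z : ZMod 125} :
    some z ∈ (baseBlock i).image (tr125 t) ↔ z - t ∈ baseOffsets i :=
  Finset.some_mem_image_map_add.trans (some_mem_baseBlock i _)

theorem existsUnique_block_some_none (x : ZMod 125) :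
    ∃! B, B ∈ blocks1 ∧ some x ∈ B ∧ none ∈ B := by
  refine ⟨(baseBlock 4).image (tr125 x), ⟨mem_blocks1.mpr ⟨x, 4, rfl⟩, ?_, ?_⟩, ?_⟩
  · exact some_mem_image_tr125_baseBlock.mpr (by rw [sub_self]; decide)
  · exact Finset.none_mem_image_map_add.mpr ((none_mem_baseBlock 4).mpr rfl)
  · rintro B ⟨hB, hxB, hnB⟩
    obtain ⟨i, a, -, ha, rfl⟩ := exists_eq_image_of_some_mem hB hxB
    obtain rfl : i = 4 := (none_mem_baseBlock i).mp (Finset.none_mem_image_map_add.mp hnB)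
    rw [ha rfl, sub_zero]

theorem existsUnique_block_some_some {x y : ZMod 125} (hxy : x ≠ y) :
    ∃! B, B ∈ blocks1 ∧ some x ∈ B ∧ some y ∈ B := by
  obtain ⟨⟨i, a⟩, hreps⟩ :=
    List.length_eq_one_iff.mp (length_differenceReps (y - x) (sub_ne_zero.mpr hxy.symm))
  obtain ⟨ha, had, -⟩ := mem_differenceReps.mp (hreps ▸ List.mem_singleton_self _)
  have shift (b : ZMod 125) : y - (x - b) = b + (y - x) := by abel
  refine ⟨(baseBlock i).image (tr125 (x - a)), ⟨mem_blocks1.mpr ⟨_, i, rfl⟩, ?_, ?_⟩, ?_⟩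
  · rwa [some_mem_image_tr125_baseBlock, sub_sub_cancel]
  · rwa [some_mem_image_tr125_baseBlock, shift]
  · rintro B ⟨hB, hxB, hyB⟩
    obtain ⟨j, b, hb, hj, rfl⟩ := exists_eq_image_of_some_mem hB hxB
    rw [some_mem_image_tr125_baseBlock, shift] at hyB
    have hrep : (j, b) ∈ differenceReps (y - x) := mem_differenceReps.mpr ⟨hb, hyB, hj⟩
    rw [hreps, List.mem_singleton, Prod.mk.injEq] at hrep
    rw [hrep.1, hrep.2]

theorem existsUnique_block_of_ne {p q : Option (ZMod 125)} (hpq : p ≠ q) :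
    ∃! B, B ∈ blocks1 ∧ p ∈ B ∧ q ∈ B := by
  rcases p with _ | x <;> rcases q with _ | y
  · exact absurd rfl hpq
  · exact (existsUnique_congr fun B => by tauto).mp (existsUnique_block_some_none y)
  · exact existsUnique_block_some_none x
  · exact existsUnique_block_some_some fun h => hpq (congrArg some h)

theorem card_of_mem_blocks1 {B : Finset (Option (ZMod 125))} (hB : B ∈ blocks1) :
    B.card = 6 := by
  obtain ⟨t, i, rfl⟩ := mem_blocks1.mp hB
  rw [Finset.card_image_of_injective (f := tr125 t) _ (Option.map_add_right_injective t),
    card_baseBlock]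

theorem image_tr125_mem_blocks1 (t : ZMod 125) {B : Finset (Option (ZMod 125))}
    (hB : B ∈ blocks1) : B.image (tr125 t) ∈ blocks1 := by
  obtain ⟨s, i, rfl⟩ := mem_blocks1.mp hB
  exact mem_blocks1.mpr ⟨s + t, i, Finset.image_map_add_image_map_add _ s t⟩

theorem eq_none_of_tr125_eq_self {t : ZMod 125} (ht : t ≠ 0) {x : Option (ZMod 125)}
    (hx : tr125 t x = x) : x = none := by
  rcases x with _ | a
  · rfl
  · exact absurd (add_eq_left.mp (Option.some_injective _ hx)) ht

theorem unital_Z125_design8 :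
    (∀ B ∈ blocks1, B.card = 6) ∧
    (∀ p q : Option (ZMod 125), p ≠ q →
      ∃! B, B ∈ blocks1 ∧ p ∈ B ∧ q ∈ B) ∧
    (∀ t : ZMod 125, ∀ B ∈ blocks1, B.image (tr125 t) ∈ blocks1) ∧
    (∀ t : ZMod 125, tr125 t none = none) ∧
    (∀ t : ZMod 125, t ≠ 0 → ∀ x : Option (ZMod 125), tr125 t x = x → x = none) :=
  ⟨fun _ => card_of_mem_blocks1, fun _ _ => existsUnique_block_of_ne,
    fun t _ => image_tr125_mem_blocks1 t, fun _ => rfl, fun _ ht _ => eq_none_of_tr125_eq_self ht⟩
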